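/- arXiv:2205.04594 — 3 statements merged into one kernel-verified Lean document; each statement's English description precedes it below -/
import Mathlib

section
/- Let K be a random variable on a finite alphabet 𝒦 with distribution P_K. Then E[(ln P_K(K))²] ≤ 1 + (ln|𝒦|)² + 4/e² + (2/e)·ln|𝒦|. -/
open Real Finset

lemma aux_se (s : ℝ) : s * Real.exp (-s) ≤ Real.exp (-1) := by
  have h : s ≤ Real.exp (s - 1) := by
    have := Real.add_one_le_exp (s - 1); linarith
  calc s * Real.exp (-s) ≤ Real.exp (s - 1) * Real.exp (-s) :=
        mul_le_mul_of_nonneg_right h (Real.exp_pos _).le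
    _ = Real.exp (-1) := by rw [← Real.exp_add]; ring_nf

lemma aux_B (y : ℝ) (h0 : 0 < y) (h1 : y ≤ 1) :
    y * (Real.log y) ^ 2 ≤ 4 / Real.exp 1 ^ 2 := by
  set t := -Real.log y with ht
  have ht0 : 0 ≤ t := by
    have := Real.log_nonpos h0.le h1; linarith
  have hy : y = Real.exp (-t) := by rw [ht, neg_neg, Real.exp_log h0]
  have h2 := aux_se (t / 2)
  have hsq : (t / 2 * Real.exp (-(t / 2))) ^ 2 ≤ Real.exp (-1) ^ 2 := by
    apply sq_le_sq' _ h2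
    have : 0 ≤ t / 2 * Real.exp (-(t / 2)) :=
      mul_nonneg (by linarith) (Real.exp_pos _).le
    nlinarith [Real.exp_pos (-1 : ℝ)]
  have he : Real.exp (-(t / 2)) ^ 2 = Real.exp (-t) := by
    rw [sq, ← Real.exp_add]; ring_nf
  have he1 : Real.exp (-1 : ℝ) ^ 2 = 1 / Real.exp 1 ^ 2 := by
    rw [Real.exp_neg]; field_simp
  have hlog : (Real.log y) ^ 2 = t ^ 2 := by rw [ht]; ring
  rw [hlog, hy]
  have : (t / 2) ^ 2 * Real.exp (-t) ≤ 1 / Real.exp 1 ^ 2 := by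
    calc (t / 2) ^ 2 * Real.exp (-t) = (t / 2 * Real.exp (-(t / 2))) ^ 2 := by
          rw [mul_pow, he]
      _ ≤ Real.exp (-1) ^ 2 := hsq
      _ = 1 / Real.exp 1 ^ 2 := he1
  have h4 : (t / 2) ^ 2 * Real.exp (-t) = Real.exp (-t) * t ^ 2 / 4 := by ring
  have h5 : 4 / Real.exp 1 ^ 2 = 4 * (1 / Real.exp 1 ^ 2) := by ring
  linarith

lemma aux_C (y : ℝ) (h0 : 0 < y) (h1 : y ≤ 1) :
    y * (-Real.log y) ≤ 1 / Real.exp 1 := by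
  have h := aux_se (-Real.log y)
  rw [neg_neg, Real.exp_log h0] at h
  rw [Real.exp_neg] at h
  calc y * (-Real.log y) = -Real.log y * y := by ring
    _ ≤ (Real.exp 1)⁻¹ := h
    _ = 1 / Real.exp 1 := by rw [one_div]

theorem stmt_4 {𝒦 : Type*} [Fintype 𝒦] [Nonempty 𝒦]
    (P : 𝒦 → ℝ) (hP0 : ∀ k, 0 ≤ P k) (hP1 : ∑ k, P k = 1) :
    ∑ k, P k * (Real.log (P k)) ^ 2 ≤
      1 + (Real.log (Fintype.card 𝒦)) ^ 2 + 4 / Real.exp 1 ^ 2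
        + (2 / Real.exp 1) * Real.log (Fintype.card 𝒦) := by
  set n : ℝ := (Fintype.card 𝒦 : ℝ) with hn
  have hn1 : 1 ≤ n := by
    have h : (1:ℕ) ≤ Fintype.card 𝒦 := Fintype.card_pos
    rw [hn]; exact_mod_cast h
  have hn0 : 0 < n := by linarith
  set L : ℝ := Real.log n with hL
  have hL0 : 0 ≤ L := Real.log_nonneg hn1
  have hPle1 : ∀ k, P k ≤ 1 := by
    intro k
    rw [← hP1]
    exact Finset.single_le_sum (fun i _ => hP0 i) (mem_univ k)
  have he : (0:ℝ) < Real.exp 1 := Real.exp_pos 1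
  have key : ∀ k, P k * (Real.log (P k)) ^ 2 ≤
      4 / (n * Real.exp 1 ^ 2) + 2 * L / (n * Real.exp 1) + P k * L ^ 2 := by
    intro k
    have hnonneg : 0 ≤ 4 / (n * Real.exp 1 ^ 2) + 2 * L / (n * Real.exp 1) := by
      have : 0 ≤ 4 / (n * Real.exp 1 ^ 2) := by positivity
      have : 0 ≤ 2 * L / (n * Real.exp 1) := by positivity
      positivity
    rcases eq_or_lt_of_le (hP0 k) with h0 | h0
    · rw [← h0]
      simpa using hnonneg
    rcases le_or_gt (P k) (1 / n) with hsmall | hbig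
    · -- small case: y = P k * n ∈ (0,1]
      set y : ℝ := P k * n with hy
      have hy0 : 0 < y := mul_pos h0 hn0
      have hy1 : y ≤ 1 := by
        rw [hy]
        calc P k * n ≤ (1 / n) * n := by
              apply mul_le_mul_of_nonneg_right hsmall hn0.le
          _ = 1 := by field_simp
      have hlogeq : Real.log (P k) = Real.log y - L := by
        rw [hy, Real.log_mul (ne_of_gt h0) (ne_of_gt hn0)]; ring
      have hB := aux_B y hy0 hy1
      have hC := aux_C y hy0 hy1
      have hPk : P k = y / n := by rw [hy]; field_simp
      rw [hlogeq, hPk]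
      have expand : y / n * (Real.log y - L) ^ 2
          = (y * (Real.log y)^2) / n + (2 * L / n) * (y * (-Real.log y)) + (y/n) * L^2 := by
        field_simp; ring
      rw [expand]
      have t1 : (y * (Real.log y)^2) / n ≤ 4 / (n * Real.exp 1 ^ 2) := by
        rw [div_le_div_iff₀ hn0 (by positivity)]
        calc y * Real.log y ^ 2 * (n * Real.exp 1 ^ 2)
            = (y * Real.log y ^ 2 * Real.exp 1 ^ 2) * n := by ring
          _ ≤ 4 * n := by
              apply mul_le_mul_of_nonneg_right _ hn0.le
              have := mul_le_mul_of_nonneg_right hB (by positivity : (0:ℝ) ≤ Real.exp 1 ^ 2)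
              calc y * Real.log y ^ 2 * Real.exp 1 ^ 2
                  ≤ (4 / Real.exp 1 ^ 2) * Real.exp 1 ^ 2 := this
                _ = 4 := by field_simp
      have t2 : (2 * L / n) * (y * (-Real.log y)) ≤ 2 * L / (n * Real.exp 1) := by
        have h1 : (2 * L / n) * (y * (-Real.log y)) ≤ (2 * L / n) * (1 / Real.exp 1) :=
          mul_le_mul_of_nonneg_left hC (by positivity)
        calc (2 * L / n) * (y * (-Real.log y)) ≤ (2 * L / n) * (1 / Real.exp 1) := h1
          _ = 2 * L / (n * Real.exp 1) := by field_simp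
      linarith
    · -- big case: 1/n < P k ≤ 1, so (log P k)^2 ≤ L^2
      have hlogle : Real.log (P k) ≤ 0 := Real.log_nonpos h0.le (hPle1 k)
      have hloggt : -L ≤ Real.log (P k) := by
        have : Real.log (1 / n) ≤ Real.log (P k) :=
          Real.log_le_log (by positivity) hbig.le
        rwa [Real.log_div one_ne_zero (ne_of_gt hn0), Real.log_one, zero_sub] at this
      have hsq : (Real.log (P k)) ^ 2 ≤ L ^ 2 := by nlinarith
      have : P k * (Real.log (P k)) ^ 2 ≤ P k * L ^ 2 :=
        mul_le_mul_of_nonneg_left hsq h0.le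
      linarith
  have sum_le : ∑ k, P k * (Real.log (P k)) ^ 2 ≤
      ∑ k : 𝒦, (4 / (n * Real.exp 1 ^ 2) + 2 * L / (n * Real.exp 1) + P k * L ^ 2) :=
    Finset.sum_le_sum (fun k _ => key k)
  have sum_eq : ∑ k : 𝒦, (4 / (n * Real.exp 1 ^ 2) + 2 * L / (n * Real.exp 1) + P k * L ^ 2)
      = 4 / Real.exp 1 ^ 2 + 2 * L / Real.exp 1 + L ^ 2 := by
    rw [Finset.sum_add_distrib, Finset.sum_add_distrib, Finset.sum_const,
      Finset.sum_const, ← Finset.sum_mul, hP1, one_mul]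
    simp only [Finset.card_univ, nsmul_eq_mul]
    rw [← hn]
    field_simp
  have hfinal : 2 * L / Real.exp 1 = (2 / Real.exp 1) * L := by ring
  rw [sum_eq, hfinal] at sum_le
  linarith
end

section
/- Let (K,Y) be random variables on finite alphabets, and let (K̃,Ỹ) have the distribution of (K,Y) conditioned on an event 𝒮 with P[𝒮] ≥ κ > 0. Suppose that on 𝒮, the pair (K,Y) always lies in the set 𝒟 = {(k,y) : P_{K|Y}(k|y) ≤ 2^{nγ − H(K|Y)}}. Then H(K|Y) ≤ nγ + log(1/κ) + H(K̃|Ỹ). -/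
open Finset

theorem stmt_9 {𝒦 𝒴 : Type*} [Fintype 𝒦] [Fintype 𝒴]
    [DecidableEq 𝒦] [DecidableEq 𝒴]
    (n : ℕ) (γ κ : ℝ) (hκ : 0 < κ)
    (P : 𝒦 × 𝒴 → ℝ) (hP0 : ∀ v, 0 ≤ P v) (hP1 : ∑ v, P v = 1)
    (HKY : ℝ)
    (hHKY : HKY = ∑ v : 𝒦 × 𝒴, P v * Real.logb 2 ((∑ k', P (k', v.2)) / P v))
    (S : Finset (𝒦 × 𝒴)) (pS : ℝ) (hpS : pS = ∑ v ∈ S, P v) (hκS : κ ≤ pS)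
    (hD : ∀ v ∈ S, P v / (∑ k', P (k', v.2)) ≤ (2 : ℝ) ^ ((n : ℝ) * γ - HKY))
    (Q : 𝒦 × 𝒴 → ℝ) (hQ : ∀ v, Q v = (if v ∈ S then P v else 0) / pS)
    (HKYt : ℝ)
    (hHKYt : HKYt = ∑ v : 𝒦 × 𝒴, Q v * Real.logb 2 ((∑ k', Q (k', v.2)) / Q v)) :
    HKY ≤ (n : ℝ) * γ + Real.logb 2 (1 / κ) + HKYt := by
  have h2pos : (0:ℝ) < 2 := by norm_num
  have h2ne1 : (2:ℝ) ≠ 1 := by norm_num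
  have h1lt2 : (1:ℝ) < 2 := one_lt_two
  set PY : 𝒴 → ℝ := fun y => ∑ k', P (k', y) with hPYdef
  set QY : 𝒴 → ℝ := fun y => ∑ k', Q (k', y) with hQYdef
  have hpS0 : 0 < pS := lt_of_lt_of_le hκ hκS
  have hQ0 : ∀ v, 0 ≤ Q v := by
    intro v; rw [hQ]
    apply div_nonneg _ hpS0.le
    split
    · exact hP0 v
    · exact le_refl 0
  have hQ1 : ∑ v, Q v = 1 := by
    rw [Finset.sum_congr rfl (fun v _ => hQ v), ← Finset.sum_div,
      Finset.sum_ite_mem, Finset.univ_inter, ← hpS, div_self hpS0.ne']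
  -- positivity facts
  have hPY0 : ∀ y, 0 ≤ PY y := fun y => Finset.sum_nonneg fun k _ => hP0 _
  have hQY0 : ∀ y, 0 ≤ QY y := fun y => Finset.sum_nonneg fun k _ => hQ0 _
  have hPle : ∀ v : 𝒦 × 𝒴, P v ≤ PY v.2 := by
    intro v
    simpa using Finset.single_le_sum (f := fun k => P (k, v.2))
      (fun k _ => hP0 _) (Finset.mem_univ v.1)
  have hQle : ∀ v : 𝒦 × 𝒴, Q v ≤ QY v.2 := by
    intro v
    simpa using Finset.single_le_sum (f := fun k => Q (k, v.2))
      (fun k _ => hQ0 _) (Finset.mem_univ v.1)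
  have hQmem : ∀ v : 𝒦 × 𝒴, 0 < Q v → v ∈ S ∧ 0 < P v := by
    intro v hv
    rw [hQ] at hv
    by_cases h : v ∈ S
    · refine ⟨h, ?_⟩
      simp only [h, if_true] at hv
      exact (div_pos_iff.mp hv).resolve_right (fun h' => absurd h'.2 (not_lt.2 hpS0.le)) |>.1
    · simp [h] at hv
  -- QY y > 0 implies PY y > 0
  have hQYP : ∀ y, 0 < QY y → 0 < PY y := by
    intro y hy
    obtain ⟨k, -, hk⟩ := Finset.exists_lt_of_sum_lt (f := fun _ : 𝒦 => (0:ℝ))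
      (by simpa using hy)
    have hk' : 0 < Q (k, y) := hk
    obtain ⟨-, hP⟩ := hQmem (k, y) hk'
    exact lt_of_lt_of_le hP (hPle (k, y))
  -- marginals sum to 1
  have hPY1 : ∑ y, PY y = 1 := by
    rw [hPYdef, ← hP1, Fintype.sum_prod_type]
    exact Finset.sum_comm
  have hQY1 : ∑ y, QY y = 1 := by
    rw [hQYdef, ← hQ1, Fintype.sum_prod_type]
    exact Finset.sum_comm
  -- decompose HKYt = A + D
  set A : ℝ := ∑ v : 𝒦 × 𝒴, Q v * Real.logb 2 (PY v.2 / Q v) with hA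
  set D : ℝ := ∑ v : 𝒦 × 𝒴, Q v * Real.logb 2 (QY v.2 / PY v.2) with hDdef
  have hsplit : HKYt = A + D := by
    rw [hHKYt, hA, hDdef, ← Finset.sum_add_distrib]
    apply Finset.sum_congr rfl
    intro v _
    rcases eq_or_lt_of_le (hQ0 v) with h0 | h0
    · simp [← h0]
    · have hQYv : 0 < QY v.2 := lt_of_lt_of_le h0 (hQle v)
      have hPYv : 0 < PY v.2 := hQYP v.2 hQYv
      rw [Real.logb_div hQYv.ne' h0.ne', Real.logb_div hPYv.ne' h0.ne',
        Real.logb_div hQYv.ne' hPYv.ne']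
      ring
  -- bound A
  have hAbound : HKY - (n:ℝ) * γ + Real.logb 2 κ ≤ A := by
    have key : ∀ v : 𝒦 × 𝒴,
        Q v * (HKY - (n:ℝ) * γ + Real.logb 2 κ) ≤ Q v * Real.logb 2 (PY v.2 / Q v) := by
      intro v
      rcases eq_or_lt_of_le (hQ0 v) with h0 | h0
      · simp [← h0]
      obtain ⟨hvS, hPv⟩ := hQmem v h0
      have hPYv : 0 < PY v.2 := lt_of_lt_of_le hPv (hPle v)
      have hrpow : (0:ℝ) < (2:ℝ) ^ ((n:ℝ) * γ - HKY) := Real.rpow_pos_of_pos h2pos _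
      -- from hD : P v / PY ≤ 2^(nγ - HKY), get 2^(HKY - nγ) ≤ PY/P v
      have h1 : (2:ℝ) ^ (HKY - (n:ℝ) * γ) ≤ PY v.2 / P v := by
        have := hD v hvS
        rw [div_le_iff₀ hPYv] at this
        rw [le_div_iff₀ hPv]
        calc (2:ℝ) ^ (HKY - (n:ℝ) * γ) * P v
            ≤ (2:ℝ) ^ (HKY - (n:ℝ) * γ) * ((2:ℝ) ^ ((n:ℝ) * γ - HKY) * PY v.2) := by
              apply mul_le_mul_of_nonneg_left this (Real.rpow_pos_of_pos h2pos _).le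
          _ = PY v.2 := by
              rw [← mul_assoc, ← Real.rpow_add h2pos]
              norm_num
      -- PY / Q v = pS * (PY / P v)
      have hQv : Q v = P v / pS := by rw [hQ]; simp [hvS]
      have h2 : κ * (2:ℝ) ^ (HKY - (n:ℝ) * γ) ≤ PY v.2 / Q v := by
        rw [hQv, div_div_eq_mul_div]
        calc κ * (2:ℝ) ^ (HKY - (n:ℝ) * γ)
            ≤ pS * (PY v.2 / P v) :=
              mul_le_mul hκS h1 (Real.rpow_pos_of_pos h2pos _).le hpS0.le
          _ = PY v.2 * pS / P v := by ring
      have h3 : Real.logb 2 (κ * (2:ℝ) ^ (HKY - (n:ℝ) * γ)) ≤ Real.logb 2 (PY v.2 / Q v) :=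
        Real.logb_le_logb_of_le h1lt2 (mul_pos hκ (Real.rpow_pos_of_pos h2pos _)) h2
      have h4 : Real.logb 2 (κ * (2:ℝ) ^ (HKY - (n:ℝ) * γ))
          = Real.logb 2 κ + (HKY - (n:ℝ) * γ) := by
        rw [Real.logb_mul hκ.ne' (Real.rpow_pos_of_pos h2pos _).ne',
          Real.logb_rpow h2pos h2ne1]
      rw [h4] at h3
      have := mul_le_mul_of_nonneg_left h3 (hQ0 v)
      linarith [this]
    calc HKY - (n:ℝ) * γ + Real.logb 2 κ
        = ∑ v, Q v * (HKY - (n:ℝ) * γ + Real.logb 2 κ) := by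
          rw [← Finset.sum_mul, hQ1, one_mul]
      _ ≤ A := Finset.sum_le_sum fun v _ => key v
  -- D ≥ 0 (Gibbs)
  have hDnn : 0 ≤ D := by
    have hgroup : D = ∑ y, QY y * Real.logb 2 (QY y / PY y) := by
      rw [hDdef, Fintype.sum_prod_type, Finset.sum_comm]
      apply Finset.sum_congr rfl
      intro y _
      show _ = (∑ k' : 𝒦, Q (k', y)) * Real.logb 2 (QY y / PY y)
      rw [Finset.sum_mul]
    have key : ∀ y, (QY y - PY y) / Real.log 2 ≤ QY y * Real.logb 2 (QY y / PY y) := by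
      intro y
      have hlog2 : 0 < Real.log 2 := Real.log_pos h1lt2
      rcases eq_or_lt_of_le (hQY0 y) with h0 | h0
      · rw [← h0]
        simp only [zero_sub, zero_mul]
        apply div_nonpos_of_nonpos_of_nonneg (by linarith [hPY0 y]) hlog2.le
      · have hPYy : 0 < PY y := hQYP y h0
        have hlb : Real.log (PY y / QY y) ≤ PY y / QY y - 1 :=
          Real.log_le_sub_one_of_pos (div_pos hPYy h0)
        have : QY y - PY y ≤ QY y * Real.log (QY y / PY y) := by
          have hrev : Real.log (QY y / PY y) = - Real.log (PY y / QY y) := by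
            rw [← Real.log_inv, inv_div]
          rw [hrev]
          have := mul_le_mul_of_nonneg_left hlb h0.le
          have hq : QY y * (PY y / QY y - 1) = PY y - QY y := by
            field_simp
          linarith [this, hq ▸ this]
        calc (QY y - PY y) / Real.log 2
            ≤ QY y * Real.log (QY y / PY y) / Real.log 2 :=
              (div_le_div_iff_of_pos_right hlog2).mpr this
          _ = QY y * Real.logb 2 (QY y / PY y) := by
              rw [Real.logb, mul_div_assoc]
    have : ∑ y, (QY y - PY y) / Real.log 2 ≤ D := by
      rw [hgroup]
      exact Finset.sum_le_sum fun y _ => key y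
    have hz : ∑ y, (QY y - PY y) / Real.log 2 = 0 := by
      rw [← Finset.sum_div, Finset.sum_sub_distrib, hQY1, hPY1]
      simp
    linarith [hz ▸ this]
  -- conclude
  have hκlog : Real.logb 2 (1/κ) = - Real.logb 2 κ := by
    rw [one_div, Real.logb_inv]
  rw [hsplit, hκlog]
  linarith [hAbound, hDnn]
end

section
/- Let K be a random variable on a finite alphabet 𝒦 with |𝒦| ≥ 3 satisfying (1/n)log|𝒦| ≤ c and |(1/n)H(K) − (1/n)log|𝒦|| ≤ β. Then for sufficiently large n, Var[(1/n)log(1/P_K(K))] ≤ β + 2βc + β². -/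
open Finset Real Filter Topology

/-!
The variance of `(1/n) log (1/P(K))` is `(1/n²) E[log² P(K)] - (H/n)²`. The second moment is
controlled in nats by `E[ln² P] ≤ (ln m)² + (ln m)/e + 4/e²` (`m = |𝒦|`): on `[0, 1]` one has
`q ln² q ≤ 4/e²` and `q ln q ≥ -1/e`, and applying these to `q = m P(k)` leaves a term
`ln m · H` which Gibbs' inequality `H ≤ ln m` bounds. With `s = (1/n) log m` and `h = H/n` the
variance is then at most `s² - h² + O(1/n)`, and `s² - h² = (s - h)(s + h) ≤ β(2c + β)`; for
`β > 0` the `O(1/n)` term is eventually below `β`. For `β = 0` the entropy is maximal, so `P` is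
uniform and the variance vanishes.
-/

lemma neg_exp_neg_one_le_mul_log {x : ℝ} (hx : 0 ≤ x) : -exp (-1) ≤ x * log x := by
  rcases hx.eq_or_lt with rfl | hx
  · simp [(exp_pos _).le]
  · have h := mul_exp_neg_le_exp_neg_one (-log x)
    rw [neg_neg, exp_log hx] at h
    linarith

lemma mul_log_sq_le {x : ℝ} (hx0 : 0 < x) (hx1 : x ≤ 1) : x * log x ^ 2 ≤ 4 * exp (-1) ^ 2 := by
  set y := -log x / 2
  have hy : 0 ≤ y := by have := log_nonpos hx0.le hx1; simp only [y]; linarith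
  have hx : exp (-y) ^ 2 = x := by
    rw [← exp_nat_mul, ← exp_log hx0]; congr 1; simp only [y]; push_cast; ring
  have hlog : log x = -2 * y := by simp only [y]; ring
  calc x * log x ^ 2 = 4 * (y * exp (-y)) ^ 2 := by rw [hlog, ← hx]; ring
    _ ≤ 4 * exp (-1) ^ 2 := by gcongr; exact mul_exp_neg_le_exp_neg_one y

lemma mul_log_mul_sub_log_le {q L : ℝ} (hL : 0 ≤ L) (hq : 0 < q) (hqL : log q ≤ L) :
    q * log q * (log q - L) ≤ L * exp (-1) + 4 * exp (-1) ^ 2 := by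
  rcases le_or_gt q 1 with hq1 | hq1
  · have h := mul_le_mul_of_nonneg_left (neg_exp_neg_one_le_mul_log hq.le) hL
    nlinarith [mul_log_sq_le hq hq1]
  · have : q * log q * (log q - L) ≤ 0 :=
      mul_nonpos_of_nonneg_of_nonpos (mul_log_nonneg hq1.le) (by linarith)
    linarith [show 0 ≤ L * exp (-1) + 4 * exp (-1) ^ 2 by positivity]

lemma mul_log_sq_le_mul_negMulLog_add {x m : ℝ} (hx0 : 0 ≤ x) (hx1 : x ≤ 1) (hm : 1 ≤ m) :
    x * log x ^ 2 ≤ log m * negMulLog x + (log m * exp (-1) + 4 * exp (-1) ^ 2) / m := by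
  have hL := log_nonneg hm
  rcases hx0.eq_or_lt with rfl | hx
  · simp only [zero_mul, negMulLog_zero, mul_zero, zero_add]; positivity
  have hm0 : 0 < m := by linarith
  have h := mul_log_mul_sub_log_le hL (mul_pos hm0 hx)
    (log_le_log (mul_pos hm0 hx) (by nlinarith))
  rw [log_mul hm0.ne' hx.ne'] at h
  rw [negMulLog, ← sub_le_iff_le_add', le_div_iff₀' hm0]
  linear_combination h

lemma mul_logb_one_div (x b : ℝ) : x * logb b (1 / x) = negMulLog x / log b := by
  rw [logb, one_div, log_inv, negMulLog]; ring

section Distribution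

variable {α : Type*} [Fintype α] {p : α → ℝ}

lemma one_le_card_of_sum_eq_one (hp1 : ∑ k, p k = 1) : (1 : ℝ) ≤ Fintype.card α := by
  have := (Finset.nonempty_of_sum_ne_zero (hp1 ▸ one_ne_zero)).card_pos
  exact_mod_cast this

lemma negMulLog_card_mul (x : ℝ) :
    negMulLog (Fintype.card α * x) =
      Fintype.card α * (negMulLog x - x * log (Fintype.card α)) := by
  rw [negMulLog_mul, negMulLog]; ring

lemma sum_one_sub_card_mul_eq_zero (hp1 : ∑ k, p k = 1) :
    ∑ k, (1 - Fintype.card α * p k) = 0 := by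
  simp [sum_sub_distrib, ← mul_sum, hp1]

lemma sum_negMulLog_le_log_card (hp0 : ∀ k, 0 ≤ p k) (hp1 : ∑ k, p k = 1) :
    ∑ k, negMulLog (p k) ≤ log (Fintype.card α) := by
  have hm := one_le_card_of_sum_eq_one hp1
  have h := sum_le_sum fun k (_ : k ∈ univ) =>
    negMulLog_le_one_sub_self (mul_nonneg (zero_le_one.trans hm) (hp0 k))
  simp_rw [sum_one_sub_card_mul_eq_zero hp1, negMulLog_card_mul, ← mul_sum, sum_sub_distrib,
    ← sum_mul, hp1, one_mul] at h
  exact sub_nonpos.mp (nonpos_of_mul_nonpos_right h (by linarith))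

lemma eq_inv_card_of_sum_negMulLog_eq (hp0 : ∀ k, 0 ≤ p k) (hp1 : ∑ k, p k = 1)
    (h : ∑ k, negMulLog (p k) = log (Fintype.card α)) (k : α) :
    p k = (Fintype.card α : ℝ)⁻¹ := by
  have hm := one_le_card_of_sum_eq_one hp1
  by_contra hk
  have hlt := sum_lt_sum (s := univ)
    (fun j _ => negMulLog_le_one_sub_self (mul_nonneg (zero_le_one.trans hm) (hp0 j)))
    ⟨k, mem_univ k, negMulLog_lt_one_sub_self (mul_nonneg (zero_le_one.trans hm) (hp0 k))
      fun h1 => hk (eq_inv_of_mul_eq_one_right h1)⟩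
  simp_rw [sum_one_sub_card_mul_eq_zero hp1, negMulLog_card_mul, ← mul_sum, sum_sub_distrib,
    ← sum_mul, hp1, one_mul, h] at hlt
  simp at hlt

lemma le_one_of_sum_eq_one (hp0 : ∀ k, 0 ≤ p k) (hp1 : ∑ k, p k = 1) (k : α) : p k ≤ 1 :=
  hp1 ▸ single_le_sum (fun j _ => hp0 j) (mem_univ k)

lemma sum_mul_log_sq_le (hp0 : ∀ k, 0 ≤ p k) (hp1 : ∑ k, p k = 1) :
    ∑ k, p k * log (p k) ^ 2 ≤
      log (Fintype.card α) ^ 2 + log (Fintype.card α) * exp (-1) + 4 * exp (-1) ^ 2 := by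
  have hm := one_le_card_of_sum_eq_one hp1
  set L := log (Fintype.card α)
  calc ∑ k, p k * log (p k) ^ 2
      ≤ ∑ k, (L * negMulLog (p k) + (L * exp (-1) + 4 * exp (-1) ^ 2) / Fintype.card α) :=
        sum_le_sum fun k _ =>
          mul_log_sq_le_mul_negMulLog_add (hp0 k) (le_one_of_sum_eq_one hp0 hp1 k) hm
    _ = L * ∑ k, negMulLog (p k) + (L * exp (-1) + 4 * exp (-1) ^ 2) := by
        rw [sum_add_distrib, ← mul_sum, sum_const, card_univ, nsmul_eq_mul,
          mul_div_cancel₀ _ (by positivity)]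
    _ ≤ L * L + (L * exp (-1) + 4 * exp (-1) ^ 2) := by
        gcongr
        exact sum_negMulLog_le_log_card hp0 hp1
    _ = _ := by ring

lemma sum_mul_sub_sq_eq (hp1 : ∑ k, p k = 1) (f : α → ℝ) :
    ∑ k, p k * (f k - ∑ j, p j * f j) ^ 2 = ∑ k, p k * f k ^ 2 - (∑ k, p k * f k) ^ 2 := by
  set μ := ∑ j, p j * f j
  calc ∑ k, p k * (f k - μ) ^ 2 = ∑ k, (p k * f k ^ 2 - 2 * μ * (p k * f k) + μ ^ 2 * p k) :=
        sum_congr rfl fun k _ => by ring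
    _ = ∑ k, p k * f k ^ 2 - 2 * μ * μ + μ ^ 2 * 1 := by
        rw [sum_add_distrib, sum_sub_distrib, ← mul_sum, ← mul_sum, hp1]
    _ = _ := by ring

lemma sum_mul_logb_one_div_sq_le (hp0 : ∀ k, 0 ≤ p k) (hp1 : ∑ k, p k = 1) (b : ℝ) :
    ∑ k, p k * logb b (1 / p k) ^ 2 ≤ logb b (Fintype.card α) ^ 2 +
      exp (-1) / log b * logb b (Fintype.card α) + 4 * (exp (-1) / log b) ^ 2 := by
  have h := div_le_div_of_nonneg_right (sum_mul_log_sq_le hp0 hp1) (sq_nonneg (log b))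
  simp only [logb, one_div, log_inv, neg_div, neg_sq, sum_div, mul_div_assoc, div_pow] at h ⊢
  exact h.trans_eq (by ring)

lemma sum_mul_sub_sq_le (hp0 : ∀ k, 0 ≤ p k) (hp1 : ∑ k, p k = 1) {H n c β : ℝ}
    (hH : H = ∑ k, p k * logb 2 (1 / p k)) (hn : 0 < n)
    (hc : 1 / n * logb 2 (Fintype.card α) ≤ c)
    (hβ : |H / n - 1 / n * logb 2 (Fintype.card α)| ≤ β) :
    ∑ k, p k * (1 / n * logb 2 (1 / p k) - H / n) ^ 2 ≤
      2 * β * c + β ^ 2 + (exp (-1) / log 2 * c + 4 * (exp (-1) / log 2) ^ 2 / n) / n := by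
  set a := exp (-1) / log 2
  set ℓ := logb 2 (Fintype.card α)
  have hmean : ∑ k, p k * (1 / n * logb 2 (1 / p k)) = H / n := by
    rw [hH, sum_div]
    exact sum_congr rfl fun k _ => by ring
  have hvar : ∑ k, p k * (1 / n * logb 2 (1 / p k) - H / n) ^ 2 =
      1 / n ^ 2 * ∑ k, p k * logb 2 (1 / p k) ^ 2 - (H / n) ^ 2 := by
    rw [← hmean, sum_mul_sub_sq_eq hp1, mul_sum]
    congr 1
    exact sum_congr rfl fun k _ => by ring
  have hmom := sum_mul_logb_one_div_sq_le hp0 hp1 2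
  have hℓ : 0 ≤ ℓ := logb_nonneg one_lt_two (one_le_card_of_sum_eq_one hp1)
  have hsq : (1 / n * ℓ) ^ 2 - (H / n) ^ 2 ≤ 2 * β * c + β ^ 2 := by
    have := abs_le.mp hβ
    have : 0 ≤ 1 / n * ℓ := by positivity
    nlinarith
  have hac : a * (1 / n * ℓ) ≤ a * c := mul_le_mul_of_nonneg_left hc (by positivity)
  calc ∑ k, p k * (1 / n * logb 2 (1 / p k) - H / n) ^ 2
      ≤ 1 / n ^ 2 * (ℓ ^ 2 + a * ℓ + 4 * a ^ 2) - (H / n) ^ 2 := by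
        rw [hvar]; gcongr
    _ = (1 / n * ℓ) ^ 2 - (H / n) ^ 2 + (a * (1 / n * ℓ) + 4 * a ^ 2 / n) / n := by
        field_simp; ring
    _ ≤ 2 * β * c + β ^ 2 + (a * c + 4 * a ^ 2 / n) / n := by gcongr

end Distribution

theorem stmt_16_general {𝒦 : ℕ → Type*} [∀ n, Fintype (𝒦 n)]
    (P : ∀ n, 𝒦 n → ℝ)
    (hP0 : ∀ n k, 0 ≤ P n k) (hP1 : ∀ n, ∑ k, P n k = 1)
    (H : ℕ → ℝ) (hH : ∀ n, H n = ∑ k, P n k * Real.logb 2 (1 / P n k))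
    (c β : ℝ)
    (hc : ∀ n : ℕ, 0 < n → (1 / n : ℝ) * Real.logb 2 (Fintype.card (𝒦 n)) ≤ c)
    (hβ : ∀ n : ℕ, 0 < n →
      |H n / n - (1 / n : ℝ) * Real.logb 2 (Fintype.card (𝒦 n))| ≤ β) :
    ∃ N : ℕ, ∀ n ≥ N, 0 < n →
      ∑ k, P n k * ((1 / n : ℝ) * Real.logb 2 (1 / P n k) - H n / n) ^ 2 ≤
        β + 2 * β * c + β ^ 2 := by
  obtain rfl | hβpos := ((abs_nonneg _).trans (hβ 1 one_pos)).eq_or_lt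
  · refine ⟨1, fun n _ hn => ?_⟩
    have hn0 : (n : ℝ) ≠ 0 := by positivity
    have hHn : H n = logb 2 (Fintype.card (𝒦 n)) := by
      have := hβ n hn
      rw [abs_nonpos_iff, sub_eq_zero, one_div_mul_eq_div, div_left_inj' hn0] at this
      exact this
    have hent : ∑ k, negMulLog (P n k) = log (Fintype.card (𝒦 n)) := by
      have h := (hH n).symm.trans hHn
      simp_rw [mul_logb_one_div, ← sum_div, logb] at h
      exact (div_left_inj' (log_pos one_lt_two).ne').mp h
    have huni := eq_inv_card_of_sum_negMulLog_eq (hP0 n) (hP1 n) hent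
    simp [huni, hHn, div_eq_inv_mul]
  · set a := exp (-1) / log 2
    have herr : Tendsto (fun n : ℕ => (a * c + 4 * a ^ 2 / n) / n) atTop (𝓝 0) :=
      (tendsto_const_nhds.add (tendsto_const_div_atTop_nhds_zero_nat _)).div_atTop
        tendsto_natCast_atTop_atTop
    obtain ⟨N, hN⟩ := eventually_atTop.mp (herr.eventually (gt_mem_nhds hβpos))
    refine ⟨N, fun n hnN hn => ?_⟩
    have := sum_mul_sub_sq_le (hP0 n) (hP1 n) (hH n) (Nat.cast_pos.2 hn) (hc n hn) (hβ n hn)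
    linarith [hN n hnN]

theorem stmt_16 {𝒦 : ℕ → Type*} [∀ n, Fintype (𝒦 n)]
    (hcard : ∀ n, 3 ≤ Fintype.card (𝒦 n))
    (P : ∀ n, 𝒦 n → ℝ)
    (hP0 : ∀ n k, 0 ≤ P n k) (hP1 : ∀ n, ∑ k, P n k = 1)
    (H : ℕ → ℝ) (hH : ∀ n, H n = ∑ k, P n k * Real.logb 2 (1 / P n k))
    (c β : ℝ)
    (hc : ∀ n : ℕ, 0 < n → (1 / n : ℝ) * Real.logb 2 (Fintype.card (𝒦 n)) ≤ c)
    (hβ : ∀ n : ℕ, 0 < n →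
      |H n / n - (1 / n : ℝ) * Real.logb 2 (Fintype.card (𝒦 n))| ≤ β) :
    ∃ N : ℕ, ∀ n ≥ N, 0 < n →
      ∑ k, P n k * ((1 / n : ℝ) * Real.logb 2 (1 / P n k) - H n / n) ^ 2 ≤
        β + 2 * β * c + β ^ 2 :=
  stmt_16_general P hP0 hP1 H hH c β hc hβ
end
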